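/- Let 𝒢 be a signed graph on [n] with half-edges allowed, and let 𝒢′ be the signed graph obtained by removing the half-edges. Then 𝒢′ is balanced (no loops and every cycle has an even number of positive edges) if and only if the incidence matrix I(𝒢), whose columns are the vectors Γ(e) for edges e of 𝒢 (e_i − e_j for negative edges, e_i + e_j for positive edges, e_i for half-edges), is totally unimodular. -/

import Mathlib

open Finset

/-- A signed graph on `[n]` with negative edges, positive edges and half-edges. -/
structure SignedGraphH (n : ℕ) where
  Eneg : Finset (Fin n × Fin n)
  Epos : Finset (Fin n × Fin n)
  H : Finset (Fin n)

/-- Index type for the edges (columns of the incidence matrix). -/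
def EdgeIdx {n : ℕ} (G : SignedGraphH n) : Type :=
  {p // p ∈ G.Eneg} ⊕ {p // p ∈ G.Epos} ⊕ {i // i ∈ G.H}

instance {n : ℕ} (G : SignedGraphH n) : Fintype (EdgeIdx G) := by
  unfold EdgeIdx; infer_instance

instance {n : ℕ} (G : SignedGraphH n) : DecidableEq (EdgeIdx G) := by
  unfold EdgeIdx; infer_instance

/-- The incidence matrix of the signed graph: columns are the vectors `Γ(e)`,
namely `eᵢ - eⱼ` for negative edges, `eᵢ + eⱼ` for positive edges, and `eᵢ`
for half-edges. -/
def incidenceMatrix {n : ℕ} (G : SignedGraphH n) : Matrix (Fin n) (EdgeIdx G) ℝ :=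
  fun k e =>
    match e with
    | Sum.inl ⟨p, _⟩ => (if k = p.1 then 1 else 0) - (if k = p.2 then 1 else 0)
    | Sum.inr (Sum.inl ⟨p, _⟩) => (if k = p.1 then 1 else 0) + (if k = p.2 then 1 else 0)
    | Sum.inr (Sum.inr ⟨i, _⟩) => if k = i then 1 else 0

/-- A matrix is totally unimodular if every square submatrix (given by injective
row and column selections) has determinant in `{-1, 0, 1}`. -/
def IsTotallyUnimodular {n : ℕ} {ι : Type*} [DecidableEq ι]
    (M : Matrix (Fin n) ι ℝ) : Prop :=
  ∀ (k : ℕ) (f : Fin k → Fin n) (g : Fin k → ι),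
    Function.Injective f → Function.Injective g →
      (M.submatrix f g).det = 1 ∨ (M.submatrix f g).det = 0 ∨
        (M.submatrix f g).det = -1

/-- `G` (with half-edges removed) contains a cycle with an odd number of
positive edges. -/
def HasOddPositiveCycle {n : ℕ} (G : SignedGraphH n) : Prop :=
  ∃ (m : ℕ) (v : Fin (m + 2) → Fin n) (sgn : Fin (m + 2) → Bool),
    Function.Injective v ∧
    (∀ k : Fin (m + 2),
      if sgn k then ((v k, v (k + 1)) ∈ G.Epos ∨ (v (k + 1), v k) ∈ G.Epos)
      else ((v k, v (k + 1)) ∈ G.Eneg ∨ (v (k + 1), v k) ∈ G.Eneg)) ∧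
    (∀ k l : Fin (m + 2), k ≠ l →
      s(v k, v (k + 1)) = s(v l, v (l + 1)) → sgn k ≠ sgn l) ∧
    (univ.filter (fun k => sgn k = true)).card % 2 = 1

/-!
If `𝒢'` is balanced, the parity of positive edges vanishes on every cycle of the underlying
graph, hence on every closed walk, so it is a coboundary: there is a switching
`φ : [n] → ℤ/2` that is constant along negative edges and changes along positive ones.
Scaling row `i` of `I(𝒢)` by `(-1)^φ(i)` makes every column with two nonzero entries sum to
zero. In a square submatrix either some column has at most one nonzero entry, and we expand
along it, or the signed rows are dependent; induction gives total unimodularity.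
Conversely, an odd-positive cycle selects a square submatrix supported on the diagonal and the
cyclic subdiagonal, whose determinant is `±2`.
-/

namespace Matrix

variable {m n R : Type*} [CommRing R] [IsDomain R]

theorem det_submatrix_eq_zero_of_signing (A : Matrix m n R) (σ : m → R) (hσ : ∀ i, σ i ≠ 0)
    (hcol : ∀ j, ∃ a b, (∀ i, i ≠ a → i ≠ b → A i j = 0) ∧
      (a ≠ b → σ a * A a j + σ b * A b j = 0))
    {k : ℕ} (f : Fin (k + 1) → m) (g : Fin (k + 1) → n) (hf : f.Injective)
    (hg : ∀ c, ∃ i₁ i₂, i₁ ≠ i₂ ∧ A (f i₁) (g c) ≠ 0 ∧ A (f i₂) (g c) ≠ 0) :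
    (A.submatrix f g).det = 0 := by
  refine exists_vecMul_eq_zero_iff.mp
    ⟨σ ∘ f, fun h => hσ (f 0) (congrFun h 0), funext fun c => ?_⟩
  obtain ⟨i₁, i₂, hne, h₁, h₂⟩ := hg c
  obtain ⟨a, b, hzero, hbal⟩ := hcol (g c)
  have hmem : ∀ i, A (f i) (g c) ≠ 0 → f i = a ∨ f i = b := fun i hi => by
    by_contra! h
    exact hi (hzero _ h.1 h.2)
  have hpair : f i₁ = a ∧ f i₂ = b ∨ f i₁ = b ∧ f i₂ = a := by
    have := hf.ne hne
    grind
  have hother : ∀ i, i ≠ i₁ ∧ i ≠ i₂ → σ (f i) * A (f i) (g c) = 0 := fun i hi => by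
    by_contra h
    have := hmem i (right_ne_zero_of_mul h)
    grind [hf.eq_iff]
  change ∑ i, σ (f i) * A (f i) (g c) = 0
  rw [Fintype.sum_eq_add i₁ i₂ hne hother]
  rcases hpair with ⟨rfl, rfl⟩ | ⟨rfl, rfl⟩
  · exact hbal (hf.ne hne)
  · rw [add_comm]
    exact hbal (hf.ne hne.symm)

theorem isTotallyUnimodular_of_signing (A : Matrix m n R)
    (hA : ∀ i j, A i j ∈ Set.range SignType.cast) (σ : m → R) (hσ : ∀ i, σ i ≠ 0)
    (hcol : ∀ j, ∃ a b, (∀ i, i ≠ a → i ≠ b → A i j = 0) ∧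
      (a ≠ b → σ a * A a j + σ b * A b j = 0)) :
    A.IsTotallyUnimodular := by
  intro k
  induction k with
  | zero => intro f g _ _; exact ⟨1, by simp⟩
  | succ k ih =>
    intro f g hf hg
    by_cases hsingle : ∃ c i₀, ∀ i, i ≠ i₀ → A (f i) (g c) = 0
    · obtain ⟨c, i₀, hc⟩ := hsingle
      rw [det_succ_column _ c, Fintype.sum_eq_single i₀ fun i hi => by simp [hc i hi]]
      change _ ∈ MonoidHom.mrange SignType.castHom.toMonoidHom
      refine mul_mem (mul_mem (pow_mem ?_ _) (hA _ _)) ?_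
      · exact ⟨-1, by simp⟩
      · exact ih _ _ (hf.comp Fin.succAbove_right_injective)
          (hg.comp Fin.succAbove_right_injective)
    · push Not at hsingle
      refine ⟨0, (det_submatrix_eq_zero_of_signing A σ hσ hcol f g hf fun c => ?_).symm⟩
      obtain ⟨i₁, -, h₁⟩ := hsingle c 0
      obtain ⟨i₂, hne, h₂⟩ := hsingle c i₁
      exact ⟨i₁, i₂, hne.symm, h₁, h₂⟩

end Matrix

theorem Equiv.Perm.eq_one_or_eq_finRotate {m : ℕ} (σ : Equiv.Perm (Fin (m + 1)))
    (h : ∀ k, σ k = k ∨ σ k = k + 1) : σ = 1 ∨ σ = finRotate (m + 1) := by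
  by_cases hid : ∀ k, σ k = k
  · exact Or.inl (Equiv.ext hid)
  right
  push Not at hid
  obtain ⟨k₀, hk₀⟩ := hid
  have hstep (t : Fin (m + 1)) (ht : σ t = t + 1) : σ (t + 1) = t + 1 + 1 := by
    rcases h (t + 1) with ht' | ht'
    · have htt : t + 1 = t := σ.injective (ht'.trans ht.symm)
      rw [ht', htt, htt]
    · exact ht'
  have hall (j : Fin (m + 1)) : σ (k₀ + j) = k₀ + j + 1 := by
    induction j using Fin.induction with
    | zero => simpa using (h k₀).resolve_left hk₀
    | succ j ih => simpa [← Fin.coeSucc_eq_succ, add_assoc] using hstep _ ih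
  ext k
  simpa [finRotate_apply] using congrArg Fin.val (hall (k - k₀))

theorem Matrix.det_of_cyclic_bidiagonal {R : Type*} [CommRing R] {m : ℕ}
    (M : Matrix (Fin (m + 2)) (Fin (m + 2)) R) (hM : ∀ i k, i ≠ k → i ≠ k + 1 → M i k = 0) :
    M.det = ∏ k, M k k + (-1) ^ (m + 1) * ∏ k, M (k + 1) k := by
  have hne : (1 : Equiv.Perm (Fin (m + 2))) ≠ finRotate (m + 2) := by
    intro h
    simpa [finRotate_apply] using congrArg (· 0) h
  rw [det_apply, ← Finset.sum_subset (Finset.subset_univ {1, finRotate (m + 2)}),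
    Finset.sum_pair hne]
  · simp [sign_finRotate, finRotate_apply, Units.smul_def, zsmul_eq_mul]
  · intro σ _ hσ
    obtain ⟨k, hk⟩ : ∃ k, σ k ≠ k ∧ σ k ≠ k + 1 := by
      by_contra! hall
      rcases σ.eq_one_or_eq_finRotate fun k => or_iff_not_imp_left.2 (hall k) with h | h <;>
        simp [h] at hσ
    rw [Finset.prod_eq_zero (f := fun i => M (σ i) i) (Finset.mem_univ k) (hM _ _ hk.1 hk.2),
      smul_zero]

lemma ZMod.neg_one_pow_val_add_one {R : Type*} [Ring R] (x : ZMod 2) :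
    (-1 : R) ^ (x + 1).val = -(-1) ^ x.val := by
  fin_cases x
  · change (-1 : R) ^ 1 = -(-1) ^ 0
    simp
  · change (-1 : R) ^ 0 = -(-1) ^ 1
    simp

namespace SimpleGraph

variable {V : Type*} {G : SimpleGraph V} (w : Sym2 V → ZMod 2)

namespace Walk

def parity {u v : V} (p : G.Walk u v) : ZMod 2 := (p.edges.map w).sum

@[simp] lemma parity_nil {u : V} : (nil : G.Walk u u).parity w = 0 := rfl

@[simp] lemma parity_cons {u v x : V} (h : G.Adj u v) (p : G.Walk v x) :
    (cons h p).parity w = w s(u, v) + p.parity w := by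
  simp [parity]

@[simp] lemma parity_append {u v x : V} (p : G.Walk u v) (q : G.Walk v x) :
    (p.append q).parity w = p.parity w + q.parity w := by
  simp [parity]

@[simp] lemma parity_reverse {u v : V} (p : G.Walk u v) : p.reverse.parity w = p.parity w := by
  simp [parity, List.sum_reverse]

@[simp] lemma parity_copy {u v u' v' : V} (p : G.Walk u v) (hu : u = u') (hv : v = v') :
    (p.copy hu hv).parity w = p.parity w := by
  simp [parity]

lemma getVert_val_add_one {u : V} {c : G.Walk u u} {N : ℕ} (hc : c.length = N + 1)
    (k : Fin (N + 1)) : c.getVert ↑(k + 1) = c.getVert (↑k + 1) := by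
  rw [Fin.val_add_one]
  split_ifs with h
  · simp [h, ← hc]
  · rfl

lemma parity_eq_sum_fin {u : V} (c : G.Walk u u) {N : ℕ} (hc : c.length = N + 1) :
    c.parity w = ∑ k : Fin (N + 1), w s(c.getVert k, c.getVert ↑(k + 1)) := by
  have hlen : c.edges.length = N + 1 := by simp [hc]
  rw [parity, ← Fin.sum_univ_fun_getElem, ← (finCongr hlen).sum_comp]
  simp [getElem_edges, getVert_val_add_one hc]

theorem parity_eq_zero_of_forall_isCycle
    (hcyc : ∀ (u : V) (c : G.Walk u u), c.IsCycle → c.parity w = 0) {u : V} (c : G.Walk u u) :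
    c.parity w = 0 := by
  induction hn : c.length using Nat.strong_induction_on generalizing u with
  | _ n ih =>
  cases c with
  | nil => rfl
  | @cons _ v _ h p =>
    -- Either `cons h p` is a cycle or the backtrack `u → v → u`, or `p` has a nontrivial
    -- closed subwalk, which we cut out.
    by_cases hp : p.IsPath
    · by_cases he : s(v, u) ∈ p.edges
      · rw [hp.eq_adj_toWalk_of_mem_edges he]
        simp [Sym2.eq_swap, CharTwo.add_self_eq_zero]
      · exact hcyc _ _ ((cons_isCycle_iff p h).2 ⟨hp, by rwa [Sym2.eq_swap]⟩)
    · obtain ⟨x, q, ⟨r, s, rfl⟩, hq⟩ : ∃ x, ∃ q : G.Walk x x, q.IsSubwalk p ∧ ¬ q.Nil := by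
        simpa using mt isPath_iff_isSubwalk_imp_nil.2 hp
      have hq' := ih q.length (by simp at hn; omega) q rfl
      have hrs := ih (cons h (r.append s)).length
        (by simp at hn ⊢; have := not_nil_iff_lt_length.1 hq; omega) _ rfl
      simp only [parity_cons, parity_append] at hq' hrs ⊢
      linear_combination hq' + hrs

theorem parity_eq_of_forall_isCycle
    (hcyc : ∀ (u : V) (c : G.Walk u u), c.IsCycle → c.parity w = 0) {u v : V}
    (p q : G.Walk u v) : p.parity w = q.parity w := by
  simpa [CharTwo.add_eq_zero] using parity_eq_zero_of_forall_isCycle w hcyc (p.append q.reverse)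

end Walk

theorem exists_potential_of_forall_isCycle
    (hcyc : ∀ (u : V) (c : G.Walk u u), c.IsCycle → c.parity w = 0) :
    ∃ φ : V → ZMod 2, ∀ u v, G.Adj u v → φ v = φ u + w s(u, v) := by
  have hbase (v : V) : G.Reachable (G.connectedComponentMk v).out v :=
    ConnectedComponent.exact (Quot.out_eq _)
  refine ⟨fun v => (hbase v).some.parity w, fun u v h => ?_⟩
  have heq : (G.connectedComponentMk u).out = (G.connectedComponentMk v).out :=
    congrArg Quot.out (ConnectedComponent.sound h.reachable)
  refine (Walk.parity_eq_of_forall_isCycle w hcyc _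
    (((hbase u).some.copy heq rfl).concat h)).trans ?_
  simp [Walk.concat]

end SimpleGraph

def EdgeIdx.signedEdge {n : ℕ} {G : SignedGraphH n} :
    EdgeIdx G → Option (Bool × Sym2 (Fin n))
  | .inl ⟨p, _⟩ => some (false, s(p.1, p.2))
  | .inr (.inl ⟨p, _⟩) => some (true, s(p.1, p.2))
  | .inr (.inr _) => none

namespace SignedGraphH

variable {n : ℕ} (G : SignedGraphH n)

def negEdges : Finset (Sym2 (Fin n)) := G.Eneg.image fun p => s(p.1, p.2)

def posEdges : Finset (Sym2 (Fin n)) := G.Epos.image fun p => s(p.1, p.2)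

/-- Parallel edges of opposite signs collapse here; a balanced `G` has none
(`mk_notMem_posEdges_of_mem_Eneg`). -/
def graph : SimpleGraph (Fin n) := SimpleGraph.fromEdgeSet ↑(G.negEdges ∪ G.posEdges)

def posIndicator (e : Sym2 (Fin n)) : ZMod 2 := if e ∈ G.posEdges then 1 else 0

variable {G}

lemma mk_mem_negEdges {i j : Fin n} :
    s(i, j) ∈ G.negEdges ↔ (i, j) ∈ G.Eneg ∨ (j, i) ∈ G.Eneg := by
  simp only [negEdges, Finset.mem_image, Sym2.eq_iff, Prod.exists]
  grind

lemma mk_mem_posEdges {i j : Fin n} :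
    s(i, j) ∈ G.posEdges ↔ (i, j) ∈ G.Epos ∨ (j, i) ∈ G.Epos := by
  simp only [posEdges, Finset.mem_image, Sym2.eq_iff, Prod.exists]
  grind

theorem hasOddPositiveCycle_of_isCycle {u : Fin n} {c : G.graph.Walk u u} (hc : c.IsCycle)
    (hodd : c.parity G.posIndicator = 1) : HasOddPositiveCycle G := by
  obtain ⟨m, hm⟩ : ∃ m, c.length = m + 2 :=
    ⟨c.length - 2, by have := hc.three_le_length; omega⟩
  set v : Fin (m + 2) → Fin n := fun k => c.getVert k
  have hinj : v.Injective := fun k l h =>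
    Fin.ext (hc.getVert_injOn' (by simp; omega) (by simp; omega) h)
  have hedge (k : Fin (m + 2)) : s(v k, v (k + 1)) = c.edges[k.val]'(by simp [hm]) := by
    simp [v, SimpleGraph.Walk.getElem_edges, SimpleGraph.Walk.getVert_val_add_one hm]
  refine ⟨m, v, fun k => decide (s(v k, v (k + 1)) ∈ G.posEdges), hinj, fun k => ?_,
    fun k l hkl h => ?_, ?_⟩
  · have hadj : G.graph.Adj (v k) (v (k + 1)) := by
      change G.graph.Adj (c.getVert k) (c.getVert ↑(k + 1))
      rw [SimpleGraph.Walk.getVert_val_add_one hm]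
      exact c.adj_getVert_succ (by omega)
    by_cases hpos : s(v k, v (k + 1)) ∈ G.posEdges
    · simpa [hpos] using mk_mem_posEdges.1 hpos
    · simp only [graph, SimpleGraph.fromEdgeSet_adj, Finset.coe_union, Set.mem_union,
        Finset.mem_coe, hpos, or_false] at hadj
      simpa [hpos] using mk_mem_negEdges.1 hadj.1
  · rw [hedge, hedge, hc.edges_nodup.getElem_inj_iff, Fin.val_inj] at h
    exact absurd h hkl
  · rw [SimpleGraph.Walk.parity_eq_sum_fin _ c hm] at hodd
    simpa [posIndicator, Finset.sum_boole, ZMod.natCast_eq_one_iff_odd, v, Nat.odd_iff]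
      using hodd

theorem mk_notMem_posEdges_of_mem_Eneg (hpe : ∀ p ∈ G.Epos, p.2 < p.1)
    (hbal : ¬ HasOddPositiveCycle G) {i j : Fin n} (hij : (i, j) ∈ G.Eneg) :
    s(i, j) ∉ G.posEdges := by
  intro hpos
  have hne : i ≠ j := by
    rintro rfl
    exact lt_irrefl i (hpe _ (by simpa using mk_mem_posEdges.1 hpos))
  -- the two edges on `{i, j}` form an odd-positive cycle of length 2
  refine hbal ⟨0, ![i, j], ![true, false], ?_, fun k => ?_, fun k l hkl _ => ?_, by decide⟩
  · intro a b hab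
    fin_cases a <;> fin_cases b <;> simp_all [eq_comm]
  · fin_cases k
    · simpa using mk_mem_posEdges.1 hpos
    · simpa [show (1 + 1 : Fin 2) = 0 from rfl] using Or.inr hij
  · fin_cases k <;> fin_cases l <;> simp_all

theorem exists_switching (hpe : ∀ p ∈ G.Epos, p.2 < p.1) (hbal : ¬ HasOddPositiveCycle G) :
    ∃ φ : Fin n → ZMod 2, (∀ p ∈ G.Eneg, φ p.1 = φ p.2) ∧ ∀ p ∈ G.Epos, φ p.1 = φ p.2 + 1 := by
  obtain ⟨φ, hφ⟩ := G.graph.exists_potential_of_forall_isCycle G.posIndicator fun u c hc =>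
    by_contra fun h => hbal (hasOddPositiveCycle_of_isCycle hc (Fin.eq_one_of_ne_zero _ h))
  refine ⟨φ, fun ⟨i, j⟩ hp => ?_, fun ⟨i, j⟩ hp => ?_⟩
  · obtain rfl | hij := eq_or_ne i j
    · rfl
    · have hadj : G.graph.Adj i j := by
        simp [graph, hij, mk_mem_negEdges.2 (Or.inl hp)]
      simpa [posIndicator, mk_notMem_posEdges_of_mem_Eneg hpe hbal hp, eq_comm]
        using hφ i j hadj
  · have hadj : G.graph.Adj i j := by
      simp [graph, (hpe _ hp).ne', mk_mem_posEdges.2 (Or.inl hp)]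
    have := hφ i j hadj
    simp only [posIndicator, mk_mem_posEdges.2 (Or.inl hp), if_true] at this
    simp [this, add_assoc, CharTwo.add_self_eq_zero]

lemma incidenceMatrix_mem_range_signType (hpe : ∀ p ∈ G.Epos, p.2 < p.1) (k : Fin n)
    (e : EdgeIdx G) : incidenceMatrix G k e ∈ Set.range SignType.cast := by
  rw [SignType.range_eq]
  rcases e with ⟨p, hp⟩ | ⟨p, hp⟩ | ⟨i, hi⟩
  · simp only [incidenceMatrix]
    split_ifs <;> simp
  · have := (hpe p hp).ne
    simp only [incidenceMatrix]
    split_ifs <;> simp_all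
  · simp only [incidenceMatrix]
    split_ifs <;> simp

theorem isTotallyUnimodular_incidenceMatrix (hpe : ∀ p ∈ G.Epos, p.2 < p.1)
    (hbal : ¬ HasOddPositiveCycle G) : (incidenceMatrix G).IsTotallyUnimodular := by
  obtain ⟨φ, hneg, hpos⟩ := exists_switching hpe hbal
  refine Matrix.isTotallyUnimodular_of_signing _ (incidenceMatrix_mem_range_signType hpe)
    (fun i => (-1) ^ (φ i).val) (fun i => by simp) fun e => ?_
  rcases e with ⟨p, hp⟩ | ⟨p, hp⟩ | ⟨i, hi⟩
  · refine ⟨p.1, p.2, fun k h₁ h₂ => by simp [incidenceMatrix, h₁, h₂], fun hne => ?_⟩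
    simp [incidenceMatrix, hne, hne.symm, hneg p hp]
  · refine ⟨p.1, p.2, fun k h₁ h₂ => by simp [incidenceMatrix, h₁, h₂], fun hne => ?_⟩
    simp [incidenceMatrix, hne, hne.symm, hpos p hp, ZMod.neg_one_pow_val_add_one]
  · exact ⟨i, i, fun k h _ => by simp [incidenceMatrix, h], fun h => absurd rfl h⟩

lemma exists_edgeIdx {x y : Fin n} (hxy : x ≠ y) {s : Bool}
    (h : if s then (x, y) ∈ G.Epos ∨ (y, x) ∈ G.Epos else (x, y) ∈ G.Eneg ∨ (y, x) ∈ G.Eneg) :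
    ∃ e : EdgeIdx G, e.signedEdge = some (s, s(x, y)) ∧
      (∀ z, z ≠ x → z ≠ y → incidenceMatrix G z e = 0) ∧
      incidenceMatrix G x e * incidenceMatrix G y e = (if s then 1 else -1) ∧
      incidenceMatrix G x e ^ 2 = 1 := by
  cases s <;> simp only [Bool.false_eq_true, if_true, if_false] at h <;> rcases h with h | h
  · refine ⟨.inl ⟨_, h⟩, ?_⟩
    simp +contextual [EdgeIdx.signedEdge, incidenceMatrix, hxy, hxy.symm]
  · refine ⟨.inl ⟨_, h⟩, ?_⟩
    simp +contextual [EdgeIdx.signedEdge, incidenceMatrix, hxy, hxy.symm, Sym2.eq_swap]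
  · refine ⟨.inr (.inl ⟨_, h⟩), ?_⟩
    simp +contextual [EdgeIdx.signedEdge, incidenceMatrix, hxy, hxy.symm]
  · refine ⟨.inr (.inl ⟨_, h⟩), ?_⟩
    simp +contextual [EdgeIdx.signedEdge, incidenceMatrix, hxy, hxy.symm, Sym2.eq_swap]

theorem not_isTotallyUnimodular_incidenceMatrix (hodd : HasOddPositiveCycle G) :
    ¬ (incidenceMatrix G).IsTotallyUnimodular := by
  obtain ⟨m, v, sgn, hinj, hedge, hdist, hcount⟩ := hodd
  choose e htag hzero hprod hsq using fun k => exists_edgeIdx (hinj.ne (by simp)) (hedge k)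
  have he : e.Injective := fun k l hkl => by
    by_contra hne
    have := (htag k).symm.trans (hkl ▸ htag l)
    simp only [Option.some.injEq, Prod.mk.injEq] at this
    exact hdist k l hne this.2 this.1
  set B := (incidenceMatrix G).submatrix v e
  have hsub (k : Fin (m + 2)) : B (k + 1) k = B k k * (if sgn k then 1 else -1) := by
    simp only [B, Matrix.submatrix_apply, ← hprod, ← mul_assoc, ← sq, hsq, one_mul]
  have hsign : (-1 : ℝ) ^ (m + 1) * ∏ k, (if sgn k then (1 : ℝ) else -1) = 1 := by
    have hcard := Finset.card_filter_add_card_filter_not (s := univ) (fun k => sgn k = true)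
    rw [Finset.prod_ite, Finset.prod_const_one, Finset.prod_const, one_mul, ← pow_add]
    refine Even.neg_one_pow ⟨m + 1 - #{k | sgn k = true} / 2, ?_⟩
    simp only [Finset.card_univ, Fintype.card_fin] at hcard
    omega
  have hdet : B.det = 2 * ∏ k, B k k := by
    rw [Matrix.det_of_cyclic_bidiagonal B fun i k h₁ h₂ =>
      hzero k (v i) (hinj.ne h₁) (hinj.ne h₂)]
    simp_rw [hsub, Finset.prod_mul_distrib]
    linear_combination (∏ k, B k k) * hsign
  have hdet_sq : B.det ^ 2 = 4 := by
    rw [hdet, mul_pow, ← Finset.prod_pow]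
    simp [B, hsq]
    norm_num
  intro hTU
  obtain ⟨s, hs⟩ := hTU (m + 2) v e hinj he
  rw [← hs] at hdet_sq
  rcases s <;> norm_num at hdet_sq

end SignedGraphH

theorem isTotallyUnimodular_iff_matrix {n : ℕ} {ι : Type*} [DecidableEq ι]
    (M : Matrix (Fin n) ι ℝ) : IsTotallyUnimodular M ↔ M.IsTotallyUnimodular := by
  simp [IsTotallyUnimodular, Matrix.IsTotallyUnimodular, SignType.range_eq, or_comm,
    or_left_comm]

theorem balanced_iff_totallyUnimodular_general {n : ℕ} (G : SignedGraphH n)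
    (hpe : ∀ p ∈ G.Epos, p.2 < p.1) :
    ¬ HasOddPositiveCycle G ↔ IsTotallyUnimodular (incidenceMatrix G) := by
  rw [isTotallyUnimodular_iff_matrix]
  exact ⟨SignedGraphH.isTotallyUnimodular_incidenceMatrix hpe,
    fun hTU hodd => SignedGraphH.not_isTotallyUnimodular_incidenceMatrix hodd hTU⟩

/-- Heller–Tompkins / Hoffman–Gale: the subgraph `𝒢'` obtained by removing
half-edges is balanced iff the incidence matrix `I(𝒢)` is totally unimodular. -/
theorem balanced_iff_totallyUnimodular {n : ℕ} (G : SignedGraphH n)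
    (hne : ∀ p ∈ G.Eneg, p.2 < p.1) (hpe : ∀ p ∈ G.Epos, p.2 < p.1) :
    ¬ HasOddPositiveCycle G ↔ IsTotallyUnimodular (incidenceMatrix G) :=
  balanced_iff_totallyUnimodular_general G hpe
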